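/- Let T ≥ 1, let ε ∈ [0,1], let j* ∈ {1,…,T}, and let a ∈ ℝ^T be a probability vector that is ε-sink-collapsed to j*, i.e., ∑_{j≠j*} a_j ≤ ε. Then the operator (spectral) norm of the softmax Jacobian J = diag(a) − a·aᵀ satisfies ‖J‖₂ ≤ 2ε. -/
import Mathlib


open Finset Matrix

/-- The operator (spectral) norm of a real matrix: its norm as a linear map between
Euclidean spaces. -/
noncomputable def opNorm {m n : ℕ} (A : Matrix (Fin m) (Fin n) ℝ) : ℝ :=
  ‖LinearMap.toContinuousLinearMap (Matrix.toEuclideanLin A)‖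

/-- The operator norm is bounded by the Frobenius norm. -/
lemma opNorm_le_sqrt_sum_sq {m n : ℕ} (A : Matrix (Fin m) (Fin n) ℝ) :
    opNorm A ≤ Real.sqrt (∑ i, ∑ j, (A i j) ^ 2) := by
  apply ContinuousLinearMap.opNorm_le_bound _ (Real.sqrt_nonneg _)
  intro x
  have hx : ‖x‖ = Real.sqrt (∑ j, (x j) ^ 2) := by
    simpa [sq_abs] using EuclideanSpace.norm_eq x
  have hAx : ‖(LinearMap.toContinuousLinearMap (Matrix.toEuclideanLin A)) x‖
      = Real.sqrt (∑ i, (∑ j, A i j * x j) ^ 2) := by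
    have := EuclideanSpace.norm_eq (Matrix.toEuclideanLin A x)
    simpa [sq_abs, Matrix.toEuclideanLin_apply, Matrix.mulVec, dotProduct] using this
  rw [hAx, hx, ← Real.sqrt_mul (by positivity)]
  apply Real.sqrt_le_sqrt
  rw [Finset.sum_mul]
  apply Finset.sum_le_sum
  intro i _
  exact Finset.sum_mul_sq_le_sq_mul_sq Finset.univ (fun j => A i j) x

/-- If the probability vector `a : ℝ^T` is ε-sink-collapsed to `j*`
(`∑_{j ≠ j*} a j ≤ ε`, `ε ∈ [0,1]`), then the operator (spectral) norm of the softmax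
Jacobian `J = diag(a) − a·aᵀ` is at most `2ε`. -/
theorem softmax_jacobian_opNorm_le_of_sink_collapsed
    (T : ℕ) (hT : 1 ≤ T) (ε : ℝ) (hε0 : 0 ≤ ε) (hε1 : ε ≤ 1)
    (jstar : Fin T) (a : Fin T → ℝ)
    (ha_nonneg : ∀ j, 0 ≤ a j) (ha_sum : ∑ j, a j = 1)
    (hcollapse : ∑ j ∈ Finset.univ.erase jstar, a j ≤ ε) :
    opNorm (Matrix.diagonal a - Matrix.vecMulVec a a) ≤ 2 * ε := by
  have ha_le_one : ∀ j, a j ≤ 1 := by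
    intro j
    rw [← ha_sum]
    exact Finset.single_le_sum (fun i _ => ha_nonneg i) (Finset.mem_univ j)
  set J := Matrix.diagonal a - Matrix.vecMulVec a a with hJ
  set t : ℝ := ∑ i, a i * (1 - a i) with ht
  -- trace bound: t ≤ 2ε
  have h_erase : (1 : ℝ) - a jstar = ∑ j ∈ Finset.univ.erase jstar, a j := by
    have := Finset.add_sum_erase Finset.univ a (Finset.mem_univ jstar)
    rw [ha_sum] at this
    linarith
  have h1 : 1 - a jstar ≤ ε := h_erase ▸ hcollapse
  have ht_le : t ≤ 2 * ε := by
    rw [ht, ← Finset.add_sum_erase Finset.univ _ (Finset.mem_univ jstar)]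
    have h2 : ∑ i ∈ Finset.univ.erase jstar, a i * (1 - a i)
        ≤ ∑ i ∈ Finset.univ.erase jstar, a i := by
      apply Finset.sum_le_sum
      intro i _
      nlinarith [ha_nonneg i, ha_le_one i]
    have h3 : a jstar * (1 - a jstar) ≤ ε := by
      nlinarith [ha_nonneg jstar, ha_le_one jstar]
    linarith
  have ht_nonneg : 0 ≤ t := Finset.sum_nonneg fun i _ => by
    nlinarith [ha_nonneg i, ha_le_one i]
  -- Frobenius bound: ∑ᵢⱼ Jᵢⱼ² ≤ t²
  have hF : ∑ i, ∑ j, (J i j) ^ 2 ≤ t ^ 2 := by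
    have hsq : t ^ 2 = ∑ i, ∑ j, (a i * (1 - a i)) * (a j * (1 - a j)) := by
      rw [sq, ht, Finset.sum_mul_sum]
    rw [hsq]
    apply Finset.sum_le_sum
    intro i _
    apply Finset.sum_le_sum
    intro j _
    by_cases hij : i = j
    · subst hij
      simp [hJ, Matrix.vecMulVec_apply]
      ring_nf
      nlinarith [ha_nonneg i, ha_le_one i]
    · have hsum2 : a i + a j ≤ 1 := by
        have : a i + a j = ∑ k ∈ ({i, j} : Finset (Fin T)), a k := by
          rw [Finset.sum_pair hij]
        rw [← ha_sum, this]
        exact Finset.sum_le_sum_of_subset_of_nonneg (Finset.subset_univ _)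
          (fun k _ _ => ha_nonneg k)
      have hij1 : a j ≤ 1 - a i := by linarith
      have hij2 : a i ≤ 1 - a j := by linarith
      have hkey : a j * a i ≤ (1 - a i) * (1 - a j) :=
        mul_le_mul hij1 hij2 (ha_nonneg i) (by linarith [ha_nonneg j])
      simp [hJ, Matrix.diagonal_apply_ne _ hij, Matrix.vecMulVec_apply]
      nlinarith [mul_nonneg (ha_nonneg i) (ha_nonneg j), hkey]
  calc opNorm J ≤ Real.sqrt (∑ i, ∑ j, (J i j) ^ 2) := opNorm_le_sqrt_sum_sq J
    _ ≤ Real.sqrt (t ^ 2) := Real.sqrt_le_sqrt hF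
    _ = t := by rw [Real.sqrt_sq ht_nonneg]
    _ ≤ 2 * ε := ht_le
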